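/- Let 𝔤 be a non-compact real simple Lie algebra with Cartan involution θ and Cartan decomposition 𝔤 = 𝔨 ⊕ 𝔰, 𝔞 maximal abelian in 𝔰, and Σ the restricted root system with root spaces g_α. Then 𝔨 is generated as a Lie algebra by the set {X_α + θX_α : X_α ∈ g_α, α ∈ Σ}. (In particular, any ideal 𝔨₁ of 𝔨 contained in 𝔪, the centralizer of 𝔞 in 𝔨, is zero.) -/

import Mathlib

/-!
# Statement 14 (Corollary 5.2): `𝔨` is generated by `{X_α + θX_α}` as a Lie algebra

`L = 𝔤` is a real simple Lie algebra of non-compact type, `theta` a Cartan involution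
(an involutive automorphism with `B(·,θ·)` negative definite), `𝔞` a maximal abelian
subspace of `𝔰 = 𝔤^{-θ}`, and `𝔨 = 𝔤^θ` (passed as a Lie subalgebra together with its
defining property).  The generating set consists of all `X + θX` where `X` lies in the
restricted root space of some nonzero `α ∈ 𝔞*`.  The parenthetical statement about ideals
`𝔨₁ ⊆ 𝔪` of `𝔨` is included as a second conclusion.
-/

noncomputable section

open LieAlgebra

lemma killing_theta_inv {L : Type*} [LieRing L] [LieAlgebra ℝ L] [Module.Finite ℝ L]
    [Module.Free ℝ L]
    (theta : L →ₗ[ℝ] L)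
    (htheta_lie : ∀ X Y : L, theta ⁅X, Y⁆ = ⁅theta X, theta Y⁆)
    (htheta_inv : ∀ X : L, theta (theta X) = X) (X Y : L) :
    killingForm ℝ L (theta X) (theta Y) = killingForm ℝ L X Y := by
  have had : ∀ Z : L, ad ℝ L (theta Z) = theta * (ad ℝ L Z) * theta := by
    intro Z
    ext W
    have := htheta_lie Z (theta W)
    rw [htheta_inv] at this
    simp only [ad_apply, Module.End.mul_apply]
    exact this.symm
  have hid : (theta * theta : L →ₗ[ℝ] L) = 1 := by
    ext W; simp [Module.End.mul_apply, htheta_inv]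
  rw [killingForm_apply_apply, killingForm_apply_apply, had, had,
    ← Module.End.mul_eq_comp, ← Module.End.mul_eq_comp]
  have : theta * ad ℝ L X * theta * (theta * ad ℝ L Y * theta)
      = theta * (ad ℝ L X * ad ℝ L Y * theta) := by
    simp only [mul_assoc]
    rw [← mul_assoc theta theta, hid, one_mul]
  rw [this, LinearMap.trace_mul_comm, mul_assoc, hid, mul_one, Module.End.mul_eq_comp]

lemma span_lemma {L : Type*} [LieRing L] [LieAlgebra ℝ L] [Module.Finite ℝ L]
    [Module.Free ℝ L]
    (theta : L →ₗ[ℝ] L)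
    (htheta_lie : ∀ X Y : L, theta ⁅X, Y⁆ = ⁅theta X, theta Y⁆)
    (htheta_inv : ∀ X : L, theta (theta X) = X)
    (hCartan : ∀ X : L, X ≠ 0 → killingForm ℝ L X (theta X) < 0)
    (𝔞 : Submodule ℝ L)
    (h𝔞θ : ∀ H ∈ 𝔞, theta H = -H)
    (h𝔞ab : ∀ H₁ ∈ 𝔞, ∀ H₂ ∈ 𝔞, ⁅H₁, H₂⁆ = 0)
    (P : Submodule ℝ L)
    (h0 : ∀ z : L, (∀ H ∈ 𝔞, ⁅H, z⁆ = 0) → z ∈ P)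
    (hroot : ∀ (α : Module.Dual ℝ 𝔞) (x : L), α ≠ 0 →
      (∀ H : 𝔞, ⁅(H : L), x⁆ = α H • x) → x ∈ P) :
    P = ⊤ := by
  classical
  have hBinv : ∀ U V : L, killingForm ℝ L (theta U) V = killingForm ℝ L U (theta V) := by
    intro U V
    conv_rhs => rw [← killing_theta_inv theta htheta_lie htheta_inv, htheta_inv]
  letI c : InnerProductSpace.Core ℝ L :=
  { inner := fun x y => - killingForm ℝ L x (theta y)
    conj_inner_symm := by
      intro x y
      simp only [starRingEnd_apply, star_trivial, neg_inj]
      rw [LieModule.traceForm_comm, hBinv]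
    re_inner_nonneg := by
      intro x
      rcases eq_or_ne x 0 with rfl | hx
      · simp
      · have := hCartan x hx
        simp only [RCLike.re_to_real]
        linarith
    definite := by
      intro x hx
      by_contra h
      have := hCartan x h
      change - killingForm ℝ L x (theta x) = 0 at hx
      linarith [hx]
    add_left := by intro x y z; simp only [map_add, LinearMap.add_apply]; ring
    smul_left := by
      intro x y r
      simp only [map_smul, LinearMap.smul_apply, starRingEnd_apply, star_trivial,
        smul_eq_mul]
      ring }
  letI : NormedAddCommGroup L := @InnerProductSpace.Core.toNormedAddCommGroup ℝ L _ _ _ c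
  letI : InnerProductSpace ℝ L := InnerProductSpace.ofCore c.toCore
  haveI : FiniteDimensional ℝ L := ‹Module.Finite ℝ L›
  set T : 𝔞 → (L →ₗ[ℝ] L) := fun H => ad ℝ L (H : L) with hT
  have hsym : ∀ H, (T H).IsSymmetric := by
    intro H x y
    show - killingForm ℝ L (⁅(H : L), x⁆) (theta y) = - killingForm ℝ L x (theta ⁅(H : L), y⁆)
    have h1 : theta ⁅(H : L), y⁆ = - ⁅(H : L), theta y⁆ := by
      rw [htheta_lie, h𝔞θ _ H.2]
      simp
    rw [h1]
    rw [LieModule.traceForm_apply_lie_apply' ℝ L L ((H : 𝔞) : L) x (theta y)]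
    simp only [map_neg, neg_neg]
  have hcomm : Pairwise (Function.onFun Commute T) := by
    intro H H' _
    letI : LieRing (Module.End ℝ L) := LieRing.ofAssociativeRing
    have h1 : (0 : Module.End ℝ L) = ⁅ad ℝ L (H : L), ad ℝ L (H' : L)⁆ := by
      rw [← (ad ℝ L).map_lie, h𝔞ab _ H.2 _ H'.2, map_zero]
    have h2 : T H * T H' - T H' * T H = 0 := by
      rw [hT]; rw [← Ring.lie_def]; exact h1.symm
    exact sub_eq_zero.mp h2
  have htop := LinearMap.IsSymmetric.iSup_iInf_eq_top_of_commute hsym hcomm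
  rw [eq_top_iff, ← htop]
  refine iSup_le fun χ => ?_
  intro x hx
  simp only [Submodule.mem_iInf] at hx
  have heig : ∀ H : 𝔞, ⁅(H : L), x⁆ = χ H • x := by
    intro H
    have := hx H
    rw [Module.End.mem_eigenspace_iff] at this
    exact this
  rcases eq_or_ne x 0 with rfl | hx0
  · exact P.zero_mem
  · have hinj := smul_left_injective ℝ hx0 (M := L)
    have hadd : ∀ H H' : 𝔞, χ (H + H') = χ H + χ H' := by
      intro H H'
      apply hinj
      show χ (H + H') • x = (χ H + χ H') • x
      rw [← heig, add_smul, ← heig, ← heig, Submodule.coe_add, add_lie]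
    have hsmul : ∀ (r : ℝ) (H : 𝔞), χ (r • H) = r * χ H := by
      intro r H
      apply hinj
      show χ (r • H) • x = (r * χ H) • x
      rw [← heig, mul_smul, ← heig, Submodule.coe_smul, smul_lie]
    set α : Module.Dual ℝ 𝔞 := { toFun := χ, map_add' := hadd, map_smul' := hsmul } with hα
    rcases eq_or_ne α 0 with h | h
    · refine h0 x fun H hH => ?_
      have : χ ⟨H, hH⟩ = 0 := by
        have := LinearMap.ext_iff.mp h ⟨H, hH⟩
        exact (by simpa using this : α ⟨H, hH⟩ = 0)
      rw [show ⁅H, x⁆ = ⁅((⟨H, hH⟩ : 𝔞) : L), x⁆ from rfl, heig, this, zero_smul]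
    · exact hroot α x h heig

theorem k_generated_by_root_vectors
    {L : Type*} [LieRing L] [LieAlgebra ℝ L] [Module.Finite ℝ L] [Module.Free ℝ L]
    [LieAlgebra.IsSimple ℝ L]
    (theta : L →ₗ[ℝ] L)
    (htheta_lie : ∀ X Y : L, theta ⁅X, Y⁆ = ⁅theta X, theta Y⁆)
    (htheta_inv : ∀ X : L, theta (theta X) = X)
    (hCartan : ∀ X : L, X ≠ 0 → killingForm ℝ L X (theta X) < 0)
    (hnoncompact : ∃ X : L, theta X ≠ X)
    (𝔞 : Submodule ℝ L)
    (h𝔞θ : ∀ H ∈ 𝔞, theta H = -H)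
    (h𝔞ab : ∀ H₁ ∈ 𝔞, ∀ H₂ ∈ 𝔞, ⁅H₁, H₂⁆ = 0)
    (h𝔞max : ∀ X : L, theta X = -X → (∀ H ∈ 𝔞, ⁅H, X⁆ = 0) → X ∈ 𝔞)
    (𝔨 : LieSubalgebra ℝ L) (h𝔨 : ∀ X : L, X ∈ 𝔨 ↔ theta X = X) :
    -- `𝔨` is generated, as a Lie algebra, by the `X_α + θX_α` over all restricted roots
    LieSubalgebra.lieSpan ℝ L
        {Y : L | ∃ (α : Module.Dual ℝ 𝔞) (X : L), α ≠ 0 ∧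
          (∀ H : 𝔞, ⁅(H : L), X⁆ = α H • X) ∧ Y = X + theta X} = 𝔨
    -- in particular, every ideal of `𝔨` contained in `𝔪` (the centralizer of `𝔞` in `𝔨`)
    -- is zero
    ∧ ∀ I : LieIdeal ℝ 𝔨, (∀ x : 𝔨, x ∈ I → ∀ H ∈ 𝔞, ⁅(x : L), H⁆ = 0) → I = ⊥ := by
  classical
  set gens : Set L := {Y : L | ∃ (α : Module.Dual ℝ 𝔞) (X : L), α ≠ 0 ∧
      (∀ H : 𝔞, ⁅(H : L), X⁆ = α H • X) ∧ Y = X + theta X} with hgens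
  set N : LieSubalgebra ℝ L := LieSubalgebra.lieSpan ℝ L gens with hNdef
  -- theta of a root vector
  have hrootθ : ∀ (α : Module.Dual ℝ 𝔞) (X : L), (∀ H : 𝔞, ⁅(H : L), X⁆ = α H • X) →
      (∀ H : 𝔞, ⁅(H : L), theta X⁆ = (-α) H • theta X) := by
    intro α X hX H
    have h1 : theta ⁅(theta (H : L)), X⁆ = ⁅(H : L), theta X⁆ := by
      rw [htheta_lie, htheta_inv]
    rw [← h1, h𝔞θ _ H.2, neg_lie, hX H, map_neg, map_smul]
    simp
  -- bracket of root vectors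
  have hVV : ∀ (α β : Module.Dual ℝ 𝔞) (X Y : L),
      (∀ H : 𝔞, ⁅(H : L), X⁆ = α H • X) → (∀ H : 𝔞, ⁅(H : L), Y⁆ = β H • Y) →
      (∀ H : 𝔞, ⁅(H : L), ⁅X, Y⁆⁆ = (α + β) H • ⁅X, Y⁆) := by
    intro α β X Y hX hY H
    rw [leibniz_lie, hX H, hY H, smul_lie, lie_smul]
    simp only [LinearMap.add_apply]
    rw [add_smul]
  -- centralizing is theta-stable
  have hθcent : ∀ z : L, (∀ H ∈ 𝔞, ⁅H, z⁆ = 0) → (∀ H ∈ 𝔞, ⁅H, theta z⁆ = 0) := by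
    intro z hz H hH
    have h1 : theta ⁅theta H, z⁆ = ⁅H, theta z⁆ := by rw [htheta_lie, htheta_inv]
    rw [← h1, h𝔞θ _ hH, neg_lie, hz _ hH, neg_zero, map_zero]
  -- generators are fixed by theta
  have hgenθ : ∀ g ∈ gens, theta g = g := by
    rintro g ⟨α, X, hα, hX, rfl⟩
    rw [map_add, htheta_inv]
    abel
  have hNk : N ≤ 𝔨 := by
    rw [hNdef, LieSubalgebra.lieSpan_le]
    intro g hg
    exact (h𝔨 g).mpr (hgenθ g hg)
  have hNθ : ∀ n ∈ N, theta n = n := fun n hn => (h𝔨 n).mp (hNk hn)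
  -- the "s-part" span
  set Sset : Set L := {Y : L | ∃ (α : Module.Dual ℝ 𝔞) (X : L), α ≠ 0 ∧
      (∀ H : 𝔞, ⁅(H : L), X⁆ = α H • X) ∧ Y = X - theta X} with hSset
  set S : Submodule ℝ L := Submodule.span ℝ Sset with hSdef
  have hSθ : ∀ s ∈ S, theta s = -s := by
    intro s hs
    induction hs using Submodule.span_induction with
    | mem x hx =>
      obtain ⟨α, X, hα, hX, rfl⟩ := hx
      rw [map_sub, htheta_inv]
      abel
    | zero => simp
    | add x y _ _ hx hy => rw [map_add, hx, hy]; abel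
    | smul r x _ hx => rw [map_smul, hx, smul_neg]
  -- m' : the centralizer of 𝔞 in 𝔨, as a submodule
  set m' : Submodule ℝ L :=
    { carrier := {z : L | theta z = z ∧ ∀ H ∈ 𝔞, ⁅H, z⁆ = 0}
      add_mem' := by
        rintro a b ⟨ha1, ha2⟩ ⟨hb1, hb2⟩
        exact ⟨by rw [map_add, ha1, hb1], fun H hH => by rw [lie_add, ha2 _ hH, hb2 _ hH, add_zero]⟩
      zero_mem' := ⟨map_zero _, fun H _ => lie_zero H⟩
      smul_mem' := by
        rintro r x ⟨hx1, hx2⟩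
        exact ⟨by rw [map_smul, hx1], fun H hH => by rw [lie_smul, hx2 _ hH, smul_zero]⟩ }
    with hm'def
  have hm'mem : ∀ z : L, z ∈ m' ↔ theta z = z ∧ ∀ H ∈ 𝔞, ⁅H, z⁆ = 0 := fun z => Iff.rfl
  -- decomposition lemmas via the span lemma
  have hkdecomp : ∀ z : L, z + theta z ∈ m' ⊔ Submodule.span ℝ gens := by
    have key : Submodule.comap (LinearMap.id + theta) (m' ⊔ Submodule.span ℝ gens) = ⊤ := by
      apply span_lemma theta htheta_lie htheta_inv hCartan 𝔞 h𝔞θ h𝔞ab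
      · intro z hz
        rw [Submodule.mem_comap]
        apply Submodule.mem_sup_left
        refine ⟨?_, ?_⟩
        · simp only [LinearMap.add_apply, LinearMap.id_apply, map_add, htheta_inv]
          abel
        · intro H hH
          simp only [LinearMap.add_apply, LinearMap.id_apply, lie_add]
          rw [hz _ hH, hθcent z hz _ hH, add_zero]
      · intro α x hα hx
        rw [Submodule.mem_comap]
        apply Submodule.mem_sup_right
        apply Submodule.subset_span
        exact ⟨α, x, hα, hx, rfl⟩
    intro z
    have := Submodule.mem_comap.mp (key ▸ Submodule.mem_top (x := z))
    simpa using this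
  have hsdecomp : ∀ z : L, z - theta z ∈ 𝔞 ⊔ S := by
    have key : Submodule.comap (LinearMap.id - theta) (𝔞 ⊔ S) = ⊤ := by
      apply span_lemma theta htheta_lie htheta_inv hCartan 𝔞 h𝔞θ h𝔞ab
      · intro z hz
        rw [Submodule.mem_comap]
        apply Submodule.mem_sup_left
        apply h𝔞max
        · simp only [LinearMap.sub_apply, LinearMap.id_apply, map_sub, htheta_inv]
          abel
        · intro H hH
          simp only [LinearMap.sub_apply, LinearMap.id_apply, lie_sub]
          rw [hz _ hH, hθcent z hz _ hH, sub_zero]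
      · intro α x hα hx
        rw [Submodule.mem_comap]
        apply Submodule.mem_sup_right
        apply Submodule.subset_span
        exact ⟨α, x, hα, hx, rfl⟩
    intro z
    have := Submodule.mem_comap.mp (key ▸ Submodule.mem_top (x := z))
    simpa using this
  have hs_in : ∀ s : L, theta s = -s → s ∈ 𝔞 ⊔ S := by
    intro s hsneg
    have h1 : s - theta s = (2 : ℝ) • s := by rw [hsneg]; module
    have := hsdecomp s
    rw [h1] at this
    have h2 : s = (2⁻¹ : ℝ) • ((2:ℝ) • s) := by module
    rw [h2]
    exact Submodule.smul_mem _ _ this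
  have hk_in : ∀ k : L, theta k = k → k ∈ m' ⊔ Submodule.span ℝ gens := by
    intro k hkfix
    have h1 : k + theta k = (2 : ℝ) • k := by rw [hkfix]; module
    have := hkdecomp k
    rw [h1] at this
    have h2 : k = (2⁻¹ : ℝ) • ((2:ℝ) • k) := by module
    rw [h2]
    exact Submodule.smul_mem _ _ this
  -- A1 : bracket of m' with N lands in N
  have hmN : ∀ m ∈ m', ∀ n ∈ N, ⁅m, n⁆ ∈ N := by
    intro m hm
    obtain ⟨hmfix, hmcent⟩ := hm
    set K' : LieSubalgebra ℝ L :=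
      { (N.toSubmodule ⊓ Submodule.comap (ad ℝ L m) N.toSubmodule : Submodule ℝ L) with
        lie_mem' := by
          rintro x y hx hy
          have hx' : x ∈ (N.toSubmodule ⊓ Submodule.comap (ad ℝ L m) N.toSubmodule) := hx
          have hy' : y ∈ (N.toSubmodule ⊓ Submodule.comap (ad ℝ L m) N.toSubmodule) := hy
          obtain ⟨hx1, hx2⟩ := Submodule.mem_inf.mp hx'
          obtain ⟨hy1, hy2⟩ := Submodule.mem_inf.mp hy'
          rw [Submodule.mem_comap] at hx2 hy2
          rw [LieSubalgebra.mem_toSubmodule] at hx1 hy1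
          rw [ad_apply] at hx2 hy2
          rw [LieSubalgebra.mem_toSubmodule] at hx2 hy2
          show ⁅x, y⁆ ∈ (N.toSubmodule ⊓ Submodule.comap (ad ℝ L m) N.toSubmodule)
          rw [Submodule.mem_inf, Submodule.mem_comap, ad_apply,
            LieSubalgebra.mem_toSubmodule, LieSubalgebra.mem_toSubmodule]
          refine ⟨N.lie_mem hx1 hy1, ?_⟩
          rw [leibniz_lie]
          exact N.add_mem (N.lie_mem hx2 hy1) (N.lie_mem hx1 hy2) } with hK'
    have hle : N ≤ K' := by
      rw [hNdef, LieSubalgebra.lieSpan_le]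
      rintro g ⟨α, X, hα, hX, rfl⟩
      have hg : (X + theta X) ∈ N := LieSubalgebra.subset_lieSpan ⟨α, X, hα, hX, rfl⟩
      have hmX : ∀ H : 𝔞, ⁅(H : L), ⁅m, X⁆⁆ = α H • ⁅m, X⁆ := by
        intro H
        rw [leibniz_lie, hmcent _ H.2, zero_lie, zero_add, hX H, lie_smul]
      have hbr : ⁅m, X + theta X⁆ = ⁅m, X⁆ + theta ⁅m, X⁆ := by
        rw [lie_add, htheta_lie, hmfix]
      constructor
      · exact hg
      · show ⁅m, X + theta X⁆ ∈ N
        rw [hbr]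
        exact LieSubalgebra.subset_lieSpan ⟨α, ⁅m, X⁆, hα, hmX, rfl⟩
    intro n hn
    exact (hle hn).2
  -- A2 : bracket of m' with S lands in S
  have hmS : ∀ m ∈ m', ∀ s ∈ S, ⁅m, s⁆ ∈ S := by
    intro m hm s hs
    obtain ⟨hmfix, hmcent⟩ := hm
    induction hs using Submodule.span_induction with
    | mem x hx =>
      obtain ⟨α, X, hα, hX, rfl⟩ := hx
      have hmX : ∀ H : 𝔞, ⁅(H : L), ⁅m, X⁆⁆ = α H • ⁅m, X⁆ := by
        intro H
        rw [leibniz_lie, hmcent _ H.2, zero_lie, zero_add, hX H, lie_smul]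
      have hbr : ⁅m, X - theta X⁆ = ⁅m, X⁆ - theta ⁅m, X⁆ := by
        rw [lie_sub, htheta_lie, hmfix]
      rw [hbr]
      exact Submodule.subset_span ⟨α, ⁅m, X⁆, hα, hmX, rfl⟩
    | zero => simp
    | add x y _ _ hx hy => rw [lie_add]; exact S.add_mem hx hy
    | smul r x _ hx => rw [lie_smul]; exact S.smul_mem r hx
  -- A3
  have haN : ∀ a ∈ 𝔞, ∀ n ∈ N, ⁅a, n⁆ ∈ 𝔞 ⊔ S := by
    intro a ha n hn
    apply hs_in
    rw [htheta_lie, h𝔞θ _ ha, hNθ n hn, neg_lie]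
  -- A4
  have haS : ∀ a ∈ 𝔞, ∀ s ∈ S, ⁅a, s⁆ ∈ Submodule.span ℝ gens := by
    intro a ha s hs
    induction hs using Submodule.span_induction with
    | mem x hx =>
      obtain ⟨α, X, hα, hX, rfl⟩ := hx
      have h1 : ⁅a, X - theta X⁆ = α ⟨a, ha⟩ • (X + theta X) := by
        rw [lie_sub, hX ⟨a, ha⟩, hrootθ α X hX ⟨a, ha⟩]
        simp only [LinearMap.neg_apply, neg_smul]
        module
      rw [h1]
      exact Submodule.smul_mem _ _ (Submodule.subset_span ⟨α, X, hα, hX, rfl⟩)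
    | zero => simp
    | add x y _ _ hx hy => rw [lie_add]; exact Submodule.add_mem _ hx hy
    | smul r x _ hx => rw [lie_smul]; exact Submodule.smul_mem _ r hx
  -- A4' : bracket of 𝔞 with a plus-generator lands in S
  have haG : ∀ a ∈ 𝔞, ∀ (α : Module.Dual ℝ 𝔞) (X : L), α ≠ 0 →
      (∀ H : 𝔞, ⁅(H : L), X⁆ = α H • X) → ⁅a, X + theta X⁆ ∈ S := by
    intro a ha α X hα hX
    have h1 : ⁅a, X + theta X⁆ = α ⟨a, ha⟩ • (X - theta X) := by
      rw [lie_add, hX ⟨a, ha⟩, hrootθ α X hX ⟨a, ha⟩]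
      simp only [LinearMap.neg_apply, neg_smul]
      module
    rw [h1]
    exact Submodule.smul_mem _ _ (Submodule.subset_span ⟨α, X, hα, hX, rfl⟩)
  -- A5 : X - theta X for a root vector of any weight
  have hminus_in : ∀ (α : Module.Dual ℝ 𝔞) (X : L),
      (∀ H : 𝔞, ⁅(H : L), X⁆ = α H • X) → X - theta X ∈ 𝔞 ⊔ S := by
    intro α X hX
    rcases eq_or_ne α 0 with rfl | hα
    · apply Submodule.mem_sup_left
      apply h𝔞max
      · rw [map_sub, htheta_inv]; abel
      · intro H hH
        have h1 := hX ⟨H, hH⟩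
        have h2 := hrootθ 0 X hX ⟨H, hH⟩
        simp only [LinearMap.zero_apply, zero_smul, neg_zero] at h1 h2
        rw [lie_sub, h1, h2, sub_zero]
    · exact Submodule.mem_sup_right (Submodule.subset_span ⟨α, X, hα, hX, rfl⟩)
  -- A6 : X + theta X trick for brackets of two root vectors (nonzero weights)
  have hWN : ∀ (α β : Module.Dual ℝ 𝔞) (X Y : L), α ≠ 0 → β ≠ 0 →
      (∀ H : 𝔞, ⁅(H : L), X⁆ = α H • X) → (∀ H : 𝔞, ⁅(H : L), Y⁆ = β H • Y) →
      ⁅X, Y⁆ + theta ⁅X, Y⁆ ∈ N := by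
    intro α β X Y hα hβ hX hY
    rcases eq_or_ne (α + β) 0 with hab | hab
    · -- the trick
      have hYβ : ∀ H : 𝔞, ⁅(H : L), theta Y⁆ = (-β) H • theta Y := hrootθ β Y hY
      have hXY' : ∀ H : 𝔞, ⁅(H : L), ⁅X, theta Y⁆⁆ = (α + -β) H • ⁅X, theta Y⁆ :=
        hVV α (-β) X (theta Y) hX hYβ
      have habne : α + -β ≠ 0 := by
        have hba : β = -α := eq_neg_of_add_eq_zero_right hab
        rw [hba, neg_neg]
        intro h
        apply hα
        have h2 : (2 : ℝ) • α = 0 := by rw [two_smul]; exact h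
        rcases smul_eq_zero.mp h2 with h3 | h3
        · norm_num at h3
        · exact h3
      have hmem1 : ⁅X, theta Y⁆ + theta ⁅X, theta Y⁆ ∈ N :=
        LieSubalgebra.subset_lieSpan ⟨α + -β, ⁅X, theta Y⁆, habne, hXY', rfl⟩
      have hmem2 : ⁅X + theta X, Y + theta Y⁆ ∈ N :=
        N.lie_mem (LieSubalgebra.subset_lieSpan ⟨α, X, hα, hX, rfl⟩)
          (LieSubalgebra.subset_lieSpan ⟨β, Y, hβ, hY, rfl⟩)
      have hbig : ⁅X + theta X, Y + theta Y⁆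
          = (⁅X, Y⁆ + theta ⁅X, Y⁆) + (⁅X, theta Y⁆ + theta ⁅X, theta Y⁆) := by
        have e1 : theta ⁅X, Y⁆ = ⁅theta X, theta Y⁆ := htheta_lie X Y
        have e2 : theta ⁅X, theta Y⁆ = ⁅theta X, Y⁆ := by rw [htheta_lie, htheta_inv]
        rw [lie_add, add_lie, add_lie, e1, e2]
        abel
      have : ⁅X, Y⁆ + theta ⁅X, Y⁆
          = ⁅X + theta X, Y + theta Y⁆ - (⁅X, theta Y⁆ + theta ⁅X, theta Y⁆) := by
        rw [hbig]; abel
      rw [this]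
      exact N.toSubmodule.sub_mem hmem2 hmem1
    · exact LieSubalgebra.subset_lieSpan ⟨α + β, ⁅X, Y⁆, hab, hVV α β X Y hX hY, rfl⟩
  -- the candidate ideal
  set Q : Submodule ℝ L := N.toSubmodule ⊔ (𝔞 ⊔ S) with hQdef
  have hNQ : N.toSubmodule ≤ Q := le_sup_left
  have haSQ : 𝔞 ⊔ S ≤ Q := le_sup_right
  have hspanQ : Submodule.span ℝ gens ≤ Q := by
    refine le_trans ?_ hNQ
    rw [Submodule.span_le]
    intro g hg
    exact LieSubalgebra.subset_lieSpan hg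
  have hQmem : ∀ q ∈ Q, ∃ n ∈ N, ∃ w ∈ 𝔞 ⊔ S, q = n + w := by
    intro q hq
    rw [hQdef, Submodule.mem_sup] at hq
    obtain ⟨n, hn, w, hw, rfl⟩ := hq
    exact ⟨n, hn, w, hw, rfl⟩
  -- bracket of m' with Q
  have hmQ : ∀ m ∈ m', ∀ q ∈ Q, ⁅m, q⁆ ∈ Q := by
    intro m hm q hq
    obtain ⟨n, hn, w, hw, rfl⟩ := hQmem q hq
    rw [Submodule.mem_sup] at hw
    obtain ⟨a, ha, s, hs, rfl⟩ := hw
    have h1 : ⁅m, a⁆ = 0 := by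
      rw [← lie_skew, hm.2 _ ha, neg_zero]
    rw [lie_add, lie_add, h1, zero_add]
    exact Q.add_mem (hNQ (hmN m hm n hn)) (haSQ (Submodule.mem_sup_right (hmS m hm s hs)))
  -- bracket of 𝔞 with Q
  have haQ : ∀ a ∈ 𝔞, ∀ q ∈ Q, ⁅a, q⁆ ∈ Q := by
    intro a ha q hq
    obtain ⟨n, hn, w, hw, rfl⟩ := hQmem q hq
    rw [Submodule.mem_sup] at hw
    obtain ⟨a', ha', s, hs, rfl⟩ := hw
    rw [lie_add, lie_add, h𝔞ab _ ha _ ha', zero_add]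
    exact Q.add_mem (haSQ (haN a ha n hn)) (hspanQ (haS a ha s hs))
  -- bracket of a plus-generator with Q
  have hgQ : ∀ (α : Module.Dual ℝ 𝔞) (X : L), α ≠ 0 →
      (∀ H : 𝔞, ⁅(H : L), X⁆ = α H • X) → ∀ q ∈ Q, ⁅X + theta X, q⁆ ∈ Q := by
    intro α X hα hX q hq
    have hSpart : ∀ s ∈ S, ⁅X + theta X, s⁆ ∈ Q := by
      intro s hs
      induction hs using Submodule.span_induction with
      | mem y hy =>
        obtain ⟨β, Y, hβ, hY, rfl⟩ := hy
        have e1 : theta ⁅X, Y⁆ = ⁅theta X, theta Y⁆ := htheta_lie X Y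
        have e2 : theta ⁅X, theta Y⁆ = ⁅theta X, Y⁆ := by rw [htheta_lie, htheta_inv]
        have hbr : ⁅X + theta X, Y - theta Y⁆
            = (⁅X, Y⁆ - theta ⁅X, Y⁆) - (⁅X, theta Y⁆ - theta ⁅X, theta Y⁆) := by
          rw [lie_sub, add_lie, add_lie, e1, e2]
          abel
        rw [hbr]
        have hm1 : ⁅X, Y⁆ - theta ⁅X, Y⁆ ∈ 𝔞 ⊔ S :=
          hminus_in (α + β) ⁅X, Y⁆ (hVV α β X Y hX hY)
        have hm2 : ⁅X, theta Y⁆ - theta ⁅X, theta Y⁆ ∈ 𝔞 ⊔ S :=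
          hminus_in (α + -β) ⁅X, theta Y⁆ (hVV α (-β) X (theta Y) hX (hrootθ β Y hY))
        exact haSQ (Submodule.sub_mem _ hm1 hm2)
      | zero => rw [lie_zero]; exact Q.zero_mem
      | add u v _ _ hu hv => rw [lie_add]; exact Q.add_mem hu hv
      | smul r u _ hu => rw [lie_smul]; exact Q.smul_mem r hu
    obtain ⟨n, hn, w, hw, rfl⟩ := hQmem q hq
    rw [Submodule.mem_sup] at hw
    obtain ⟨a, ha, s, hs, rfl⟩ := hw
    have hg : X + theta X ∈ N := LieSubalgebra.subset_lieSpan ⟨α, X, hα, hX, rfl⟩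
    rw [lie_add, lie_add]
    refine Q.add_mem (hNQ (N.lie_mem hg hn)) (Q.add_mem ?_ ?_)
    · have h1 : ⁅X + theta X, a⁆ = -⁅a, X + theta X⁆ := (lie_skew _ _).symm
      rw [h1]
      exact Q.neg_mem (haSQ (Submodule.mem_sup_right (haG a ha α X hα hX)))
    · exact hSpart s hs
  -- bracket of a minus-generator with Q
  have hsQ : ∀ (α : Module.Dual ℝ 𝔞) (X : L), α ≠ 0 →
      (∀ H : 𝔞, ⁅(H : L), X⁆ = α H • X) → ∀ q ∈ Q, ⁅X - theta X, q⁆ ∈ Q := by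
    intro α X hα hX q hq
    have hXS : X - theta X ∈ S := Submodule.subset_span ⟨α, X, hα, hX, rfl⟩
    have hWpart : ∀ w ∈ Submodule.span ℝ gens, ⁅X - theta X, w⁆ ∈ Q := by
      intro w hw
      induction hw using Submodule.span_induction with
      | mem g hg =>
        obtain ⟨β, Y, hβ, hY, rfl⟩ := hg
        have h1 : ⁅X - theta X, Y + theta Y⁆ = -⁅Y + theta Y, X - theta X⁆ :=
          (lie_skew _ _).symm
        rw [h1]
        exact Q.neg_mem (hgQ β Y hβ hY _ (haSQ (Submodule.mem_sup_right hXS)))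
      | zero => rw [lie_zero]; exact Q.zero_mem
      | add u v _ _ hu hv => rw [lie_add]; exact Q.add_mem hu hv
      | smul r u _ hu => rw [lie_smul]; exact Q.smul_mem r hu
    have hSpart : ∀ s ∈ S, ⁅X - theta X, s⁆ ∈ Q := by
      intro s hs
      induction hs using Submodule.span_induction with
      | mem y hy =>
        obtain ⟨β, Y, hβ, hY, rfl⟩ := hy
        have e1 : theta ⁅X, Y⁆ = ⁅theta X, theta Y⁆ := htheta_lie X Y
        have e2 : theta ⁅X, theta Y⁆ = ⁅theta X, Y⁆ := by rw [htheta_lie, htheta_inv]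
        have hbr : ⁅X - theta X, Y - theta Y⁆
            = (⁅X, Y⁆ + theta ⁅X, Y⁆) - (⁅X, theta Y⁆ + theta ⁅X, theta Y⁆) := by
          rw [lie_sub, sub_lie, sub_lie, e1, e2]
          abel
        rw [hbr]
        have hm1 : ⁅X, Y⁆ + theta ⁅X, Y⁆ ∈ N := hWN α β X Y hα hβ hX hY
        have hm2 : ⁅X, theta Y⁆ + theta ⁅X, theta Y⁆ ∈ N :=
          hWN α (-β) X (theta Y) hα (neg_ne_zero.mpr hβ) hX (hrootθ β Y hY)
        exact hNQ (Submodule.sub_mem _ hm1 hm2)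
      | zero => rw [lie_zero]; exact Q.zero_mem
      | add u v _ _ hu hv => rw [lie_add]; exact Q.add_mem hu hv
      | smul r u _ hu => rw [lie_smul]; exact Q.smul_mem r hu
    obtain ⟨n, hn, w, hw, rfl⟩ := hQmem q hq
    rw [Submodule.mem_sup] at hw
    obtain ⟨a, ha, s, hs, rfl⟩ := hw
    rw [lie_add, lie_add]
    refine Q.add_mem ?_ (Q.add_mem ?_ ?_)
    · -- vs n ∈ N
      obtain ⟨mm, hmm, ww, hww, hneq⟩ := Submodule.mem_sup.mp (hk_in n (hNθ n hn))
      rw [← hneq, lie_add]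
      refine Q.add_mem ?_ (hWpart ww hww)
      · have h1 : ⁅X - theta X, mm⁆ = -⁅mm, X - theta X⁆ := (lie_skew _ _).symm
        rw [h1]
        exact Q.neg_mem (haSQ (Submodule.mem_sup_right (hmS mm hmm _ hXS)))
    · -- vs a ∈ 𝔞
      have h1 : ⁅X - theta X, a⁆ = -⁅a, X - theta X⁆ := (lie_skew _ _).symm
      rw [h1]
      exact Q.neg_mem (hspanQ (haS a ha _ hXS))
    · exact hSpart s hs
  -- Q is an ideal
  have hQlie : ∀ (z : L), ∀ q ∈ Q, ⁅z, q⁆ ∈ Q := by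
    have key : ∀ q ∈ Q, Submodule.comap
        ((ad ℝ L : L →ₗ[ℝ] Module.End ℝ L).flip q) Q = ⊤ := by
      intro q hq
      apply span_lemma theta htheta_lie htheta_inv hCartan 𝔞 h𝔞θ h𝔞ab
      · intro z hz
        rw [Submodule.mem_comap]
        have hzv : (((ad ℝ L : L →ₗ[ℝ] Module.End ℝ L).flip q) z)
            = ⁅z, q⁆ := rfl
        rw [hzv]
        have heq : z = (2⁻¹ : ℝ) • ((z + theta z) + (z - theta z)) := by module
        have h1 : z + theta z ∈ m' := by
          refine ⟨by rw [map_add, htheta_inv]; abel, fun H hH => ?_⟩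
          rw [lie_add, hz _ hH, hθcent z hz _ hH, add_zero]
        have h2 : z - theta z ∈ 𝔞 := by
          apply h𝔞max
          · rw [map_sub, htheta_inv]; abel
          · intro H hH
            rw [lie_sub, hz _ hH, hθcent z hz _ hH, sub_zero]
        rw [heq, smul_lie, add_lie]
        exact Q.smul_mem _ (Q.add_mem (hmQ _ h1 q hq) (haQ _ h2 q hq))
      · intro α x hα hx
        rw [Submodule.mem_comap]
        have hzv : (((ad ℝ L : L →ₗ[ℝ] Module.End ℝ L).flip q) x)
            = ⁅x, q⁆ := rfl
        rw [hzv]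
        have heq : x = (2⁻¹ : ℝ) • ((x + theta x) + (x - theta x)) := by module
        rw [heq, smul_lie, add_lie]
        exact Q.smul_mem _ (Q.add_mem (hgQ α x hα hx q hq) (hsQ α x hα hx q hq))
    intro z q hq
    have h1 := (key q hq) ▸ Submodule.mem_top (x := z)
    have h2 := Submodule.mem_comap.mp h1
    exact h2
  set QI : LieIdeal ℝ L := { Q with lie_mem := fun {x m} hm => hQlie x m hm } with hQIdef
  have hQImem : ∀ z : L, z ∈ QI ↔ z ∈ Q := fun z => Iff.rfl
  -- a nonzero element of 𝔰
  obtain ⟨X₀, hX₀⟩ := hnoncompact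
  set s₀ : L := X₀ - theta X₀ with hs₀def
  have hs₀θ : theta s₀ = -s₀ := by rw [hs₀def, map_sub, htheta_inv]; abel
  have hs₀ne : s₀ ≠ 0 := sub_ne_zero.mpr (Ne.symm hX₀)
  have hs₀Q : s₀ ∈ Q := haSQ (hs_in s₀ hs₀θ)
  -- Q = ⊤ by simplicity
  have hQtop : ∀ z : L, z ∈ Q := by
    rcases LieAlgebra.IsSimple.eq_bot_or_eq_top QI with h | h
    · exfalso
      have : s₀ ∈ QI := (hQImem s₀).mpr hs₀Q
      rw [h, LieSubmodule.mem_bot] at this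
      exact hs₀ne this
    · intro z
      have : z ∈ QI := h ▸ LieSubmodule.mem_top z
      exact (hQImem z).mp this
  -- first conclusion
  have h𝔨N : 𝔨 ≤ N := by
    intro k hk
    obtain ⟨n, hn, w, hw, hkeq⟩ := hQmem k (hQtop k)
    have hwθ : theta w = -w := by
      rw [Submodule.mem_sup] at hw
      obtain ⟨a, ha, s, hs, rfl⟩ := hw
      rw [map_add, h𝔞θ _ ha, hSθ s hs]
      abel
    have hwfix : theta w = w := by
      have h1 : w = k - n := by rw [hkeq]; abel
      rw [h1, map_sub, (h𝔨 k).mp hk, hNθ n hn]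
    have hww : w = -w := hwfix.symm.trans hwθ
    have h2 : (2 : ℝ) • w = 0 := by
      rw [two_smul]
      rw [add_eq_zero_iff_eq_neg]
      exact hww
    have hw0 : w = 0 := by
      rcases smul_eq_zero.mp h2 with h3 | h3
      · norm_num at h3
      · exact h3
    rw [hkeq, hw0, add_zero]
    exact hn
  refine ⟨le_antisymm hNk h𝔨N, ?_⟩
  intro I hI
  have hIcent : ∀ x : 𝔨, x ∈ I → ∀ H ∈ 𝔞, ⁅H, (x : L)⁆ = 0 := by
    intro x hx H hH
    rw [← lie_skew, hI x hx H hH, neg_zero]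
  -- brackets of elements of I with root vectors vanish
  have hstep : ∀ x : 𝔨, x ∈ I → ∀ (α : Module.Dual ℝ 𝔞) (X : L), α ≠ 0 →
      (∀ H : 𝔞, ⁅(H : L), X⁆ = α H • X) → ⁅(x : L), X⁆ = 0 := by
    intro x hx α X hα hX
    have hufix : theta (x : L) = (x : L) := (h𝔨 _).mp x.2
    have hW : ∀ H : 𝔞, ⁅(H : L), ⁅(x : L), X⁆⁆ = α H • ⁅(x : L), X⁆ := by
      intro H
      rw [leibniz_lie, hIcent x hx _ H.2, zero_lie, zero_add, hX H, lie_smul]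
    have hkg : X + theta X ∈ 𝔨 := (h𝔨 _).mpr (by rw [map_add, htheta_inv]; abel)
    have hbrI : ⁅(⟨X + theta X, hkg⟩ : 𝔨), x⁆ ∈ I := I.lie_mem hx
    have hcoe : ((⁅(⟨X + theta X, hkg⟩ : 𝔨), x⁆ : 𝔨) : L) = ⁅X + theta X, (x : L)⁆ := rfl
    have hcent2 := hIcent _ hbrI
    obtain ⟨H₀, hH₀⟩ : ∃ H : 𝔞, α H ≠ 0 := by
      by_contra h
      push_neg at h
      exact hα (LinearMap.ext fun H => h H)
    have huθX : ⁅(x : L), theta X⁆ = theta ⁅(x : L), X⁆ := by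
      rw [htheta_lie, hufix]
    have h0 : ⁅(H₀ : L), ⁅X + theta X, (x : L)⁆⁆ = 0 := by
      rw [← hcoe]
      exact hcent2 _ H₀.2
    have hexp : ⁅X + theta X, (x : L)⁆ = -(⁅(x : L), X⁆ + theta ⁅(x : L), X⁆) := by
      rw [← lie_skew, lie_add, huθX]
    have hθW := hrootθ α ⁅(x : L), X⁆ hW
    rw [hexp, lie_neg, lie_add, hW H₀, hθW H₀, neg_eq_zero] at h0
    -- h0 : α H₀ • W + (-α) H₀ • theta W = 0
    have hsub : α H₀ • (⁅(x : L), X⁆ - theta ⁅(x : L), X⁆) = 0 := by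
      rw [smul_sub, sub_eq_add_neg]
      simpa using h0
    have hWfix : theta ⁅(x : L), X⁆ = ⁅(x : L), X⁆ := by
      rcases smul_eq_zero.mp hsub with h3 | h3
      · exact absurd h3 hH₀
      · rw [sub_eq_zero] at h3
        exact h3.symm
    have e1 : α H₀ • ⁅(x : L), X⁆ = -(α H₀) • ⁅(x : L), X⁆ := by
      conv_lhs => rw [← hW H₀]
      conv_lhs => rw [← hWfix]
      rw [hθW H₀, hWfix]
      simp
    have e3 : (α H₀ + α H₀) • ⁅(x : L), X⁆ = 0 := by
      rw [add_smul]
      nth_rewrite 2 [e1]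
      rw [neg_smul]
      abel
    rcases smul_eq_zero.mp e3 with h3 | h3
    · exfalso
      apply hH₀
      linarith
    · exact h3
  -- brackets with all of 𝔞 ⊔ S vanish
  have huS : ∀ x : 𝔨, x ∈ I → ∀ w ∈ 𝔞 ⊔ S, ⁅(x : L), w⁆ = 0 := by
    intro x hx w hw
    rw [Submodule.mem_sup] at hw
    obtain ⟨a, ha, s, hs, rfl⟩ := hw
    have hSzero : ∀ s ∈ S, ⁅(x : L), s⁆ = 0 := by
      intro s hs
      induction hs using Submodule.span_induction with
      | mem y hy =>
        obtain ⟨β, Y, hβ, hY, rfl⟩ := hy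
        rw [lie_sub, hstep x hx β Y hβ hY,
          hstep x hx (-β) (theta Y) (neg_ne_zero.mpr hβ) (hrootθ β Y hY), sub_zero]
      | zero => exact lie_zero _
      | add u v _ _ hu hv => rw [lie_add, hu, hv, add_zero]
      | smul r u _ hu => rw [lie_smul, hu, smul_zero]
    rw [lie_add, hI x hx a ha, hSzero s hs, add_zero]
  -- the ideal of L generated by (the image of) I
  set J : Submodule ℝ L :=
    Submodule.map ((𝔨.incl : 𝔨 →ₗ⁅ℝ⁆ L) : 𝔨 →ₗ[ℝ] L) (I : Submodule ℝ 𝔨) with hJdef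
  have hJmem : ∀ z : L, z ∈ J ↔ ∃ x : 𝔨, x ∈ I ∧ (x : L) = z := by
    intro z
    rw [hJdef, Submodule.mem_map]
    constructor
    · rintro ⟨y, hy, rfl⟩
      exact ⟨y, hy, rfl⟩
    · rintro ⟨y, hy, rfl⟩
      exact ⟨y, hy, rfl⟩
  have hJlie : ∀ (z : L), ∀ v ∈ J, ⁅z, v⁆ ∈ J := by
    intro z v hv
    obtain ⟨y, hy, rfl⟩ := (hJmem v).mp hv
    have heq : z = (2⁻¹ : ℝ) • ((z + theta z) + (z - theta z)) := by module
    have hk' : z + theta z ∈ 𝔨 := (h𝔨 _).mpr (by rw [map_add, htheta_inv]; abel)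
    have h1 : ⁅z + theta z, (y : L)⁆ ∈ J := by
      have hbr : ⁅(⟨z + theta z, hk'⟩ : 𝔨), y⁆ ∈ I := I.lie_mem hy
      exact (hJmem _).mpr ⟨_, hbr, rfl⟩
    have h2 : ⁅z - theta z, (y : L)⁆ = 0 := by
      have hzs : z - theta z ∈ 𝔞 ⊔ S := by
        apply hs_in
        rw [map_sub, htheta_inv]
        abel
      rw [← lie_skew, huS y hy _ hzs, neg_zero]
    rw [heq, smul_lie, add_lie, h2, add_zero]
    exact J.smul_mem _ h1
  set JI : LieIdeal ℝ L := { J with lie_mem := fun {x m} hm => hJlie x m hm } with hJIdef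
  have hJImem : ∀ z : L, z ∈ JI ↔ z ∈ J := fun z => Iff.rfl
  have hJbot : JI = ⊥ := by
    rcases LieAlgebra.IsSimple.eq_bot_or_eq_top JI with h | h
    · exact h
    · exfalso
      have hs₀J : s₀ ∈ J := (hJImem s₀).mp (h ▸ LieSubmodule.mem_top s₀)
      obtain ⟨y, hy, hyeq⟩ := (hJmem s₀).mp hs₀J
      have hfix : theta s₀ = s₀ := by
        rw [← hyeq]
        exact (h𝔨 _).mp y.2
      have hww : s₀ = -s₀ := hfix.symm.trans hs₀θ
      have h2 : (2 : ℝ) • s₀ = 0 := by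
        rw [two_smul, add_eq_zero_iff_eq_neg]
        exact hww
      rcases smul_eq_zero.mp h2 with h3 | h3
      · norm_num at h3
      · exact hs₀ne h3
  rw [LieSubmodule.eq_bot_iff]
  intro x hx
  have : (x : L) ∈ J := (hJmem _).mpr ⟨x, hx, rfl⟩
  have hx0 : (x : L) = 0 := by
    have := (hJImem _).mpr this
    rw [hJbot, LieSubmodule.mem_bot] at this
    exact this
  exact Subtype.ext hx0
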